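/- The subgroup L₂(11)_B = ⟨α, β, δ⟩ of Perm(Fin 12) is isomorphic as a group to L₂(11) = PSL(2, 𝔽₁₁). -/

import Mathlib

open Equiv

/-- The 11-cycle (0 1 2 3 4 5 6 7 8 9 10) on `Fin 12`, fixing 11. -/
def α : Equiv.Perm (Fin 12) := c[0,1,2,3,4,5,6,7,8,9,10]

/-- The permutation (1 3 9 5 4)(2 6 7 10 8), fixing 0 and 11. -/
def β : Equiv.Perm (Fin 12) := c[1,3,9,5,4] * c[2,6,7,10,8]

/-- The permutation (11 0)(1 10)(2 5)(3 7)(4 8)(6 9). -/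
def γ : Equiv.Perm (Fin 12) := c[11,0] * c[1,10] * c[2,5] * c[3,7] * c[4,8] * c[6,9]

/-- The permutation (2 10)(3 4)(5 9)(6 7), fixing 0, 1, 8 and 11. -/
def δ : Equiv.Perm (Fin 12) := c[2,10] * c[3,4] * c[5,9] * c[6,7]

/-- L₂(11)_B, the subgroup of Perm (Fin 12) generated by α, β, δ. -/
def L2_11_B : Subgroup (Equiv.Perm (Fin 12)) := Subgroup.closure {α, β, δ}

/-- L₂(11) = PSL(2, 𝔽₁₁): the quotient of SL(2, ℤ/11ℤ) by its center. -/
abbrev L2_11 :=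
  Matrix.SpecialLinearGroup (Fin 2) (ZMod 11) ⧸
    Subgroup.center (Matrix.SpecialLinearGroup (Fin 2) (ZMod 11))

/-!
`SL(2, 𝔽₁₁)` acts on the projective line `P¹ = 𝔽₁₁ ∪ {∞}` by Möbius transformations, and hence,
by conjugation, on permutations of `P¹`. It permutes the eleven perfect matchings
`M_k = {{k, ∞}} ∪ {{k + x, k + 6x} : x a nonzero square}` of `P¹` (each stabilised by an `A₅`);
this is Galois' exceptional action of `PSL(2, 11)` of degree 11. Labelling `M_k` by `k`, the
generators `T = [[1, 1], [0, 1]]`, `S = [[0, -1], [1, 0]]` and `diag(5, 9)` act as `α`, `δ`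
and `β`, and `S`, `T` generate, so the image of `SL(2, 𝔽₁₁)` is `L₂(11)_B`. An element fixing
every `M_k` commutes with it as a permutation of `P¹`; suitable products of four matchings have a
single fixed point, placed anywhere we like, so such an element acts trivially on `P¹` and is
therefore central.
-/

open Matrix MatrixGroups OnePoint Function

namespace Matrix.SL2

variable {R : Type*} [CommRing R]

def S : SL(2, R) := ⟨!![0, -1; 1, 0], by simp⟩

lemma S_mul_transvection_mul_S_inv (c : R) :
    S * SpecialLinearGroup.transvection zero_ne_one (-c) * S⁻¹ =
      SpecialLinearGroup.transvection one_ne_zero c := by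
  refine Subtype.ext ?_
  simp only [SpecialLinearGroup.coe_mul, SpecialLinearGroup.coe_inv]
  ext i j
  fin_cases i <;> fin_cases j <;>
    simp [S, adjugate_fin_two, SpecialLinearGroup.transvection_coe, mul_apply, Fin.sum_univ_two,
      vecMul, dotProduct, single_apply, one_apply]

lemma transvection_natCast {i j : Fin 2} (hij : i ≠ j) (n : ℕ) :
    SpecialLinearGroup.transvection hij (n : R) = SpecialLinearGroup.transvection hij 1 ^ n := by
  induction n with
  | zero => simp
  | succ n ih => rw [Nat.cast_succ, SpecialLinearGroup.transvection_add, ih, pow_succ]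

lemma closure_insert_S_range_transvection_eq_top {K : Type*} [Field K] :
    Subgroup.closure
      (insert (S : SL(2, K)) (Set.range (SpecialLinearGroup.transvection zero_ne_one))) = ⊤ := by
  set H := Subgroup.closure
    (insert (S : SL(2, K)) (Set.range (SpecialLinearGroup.transvection zero_ne_one)))
  have hS : S ∈ H := Subgroup.subset_closure (Set.mem_insert _ _)
  have hupper (c : K) : SpecialLinearGroup.transvection zero_ne_one c ∈ H :=
    Subgroup.subset_closure (Set.mem_insert_of_mem _ ⟨c, rfl⟩)
  refine eq_top_iff.2 fun g _ => transvection_induction (· ∈ H) (fun i j hij c => ?_)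
    (fun _ _ => mul_mem) g
  fin_cases i <;> fin_cases j
  · exact absurd rfl hij
  · exact hupper c
  · rw [← S_mul_transvection_mul_S_inv]
    exact mul_mem (mul_mem hS (hupper _)) (inv_mem hS)
  · exact absurd rfl hij

lemma closure_S_transvection_one_eq_top (p : ℕ) [Fact p.Prime] :
    Subgroup.closure {S, SpecialLinearGroup.transvection zero_ne_one 1} =
      (⊤ : Subgroup SL(2, ZMod p)) := by
  rw [eq_top_iff, ← closure_insert_S_range_transvection_eq_top, Subgroup.closure_le]
  rintro _ (rfl | ⟨c, rfl⟩)
  · exact Subgroup.subset_closure (Set.mem_insert _ _)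
  · rw [← ZMod.natCast_zmod_val c, transvection_natCast]
    exact pow_mem (Subgroup.subset_closure (Set.mem_insert_of_mem _ (Set.mem_singleton _))) _

end Matrix.SL2

lemma ZMod.inv_eq_pow_sub_two {p : ℕ} [Fact p.Prime] {x : ZMod p} (hx : x ≠ 0) :
    x⁻¹ = x ^ (p - 2) := by
  refine (eq_inv_of_mul_eq_one_left ?_).symm
  rw [← pow_succ, show p - 2 + 1 = p - 1 by have := (Fact.out : p.Prime).two_le; omega,
    ZMod.pow_card_sub_one_eq_one hx]

lemma Equiv.Perm.apply_eq_self_of_commute {X : Type*} {f w : Perm X} (h : Commute f w) {p : X}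
    (hw : ∀ x, w x = x ↔ x = p) : f p = p :=
  (hw _).1 (by rw [← Perm.mul_apply, ← h.eq, Perm.mul_apply, (hw p).2 rfl])

open scoped Pointwise

namespace MulAction

variable {G X Y : Type*} [Group G] [MulAction G Y] {m : X → Y}

lemma smul_range_eq_of_smul_eq {g : G} (σ : Perm X) (h : ∀ x, g • m x = m (σ x)) :
    g • Set.range m = Set.range m := by
  rw [Set.smul_set_range, funext h]
  exact σ.surjective.range_comp m

lemma smul_mem_range_of_closure_eq_top {s : Set G} (hs : Subgroup.closure s = ⊤)
    (h : ∀ g ∈ s, ∃ σ : Perm X, ∀ x, g • m x = m (σ x)) (g : G) (x : X) :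
    g • m x ∈ Set.range m := by
  have hle : Subgroup.closure s ≤ stabilizer G (Set.range m) := by
    rw [Subgroup.closure_le]
    intro g hg
    obtain ⟨σ, hσ⟩ := h g hg
    exact smul_range_eq_of_smul_eq σ hσ
  rw [← mem_stabilizer_iff.1 (hle (hs ▸ Subgroup.mem_top g))]
  exact Set.smul_mem_smul_set ⟨x, rfl⟩

noncomputable def familyPermHom (hm : Injective m) (hG : ∀ (g : G) x, g • m x ∈ Set.range m) :
    G →* Perm X :=
  letI : SMul G X := ⟨fun g x => (hG g x).choose⟩
  letI : MulAction G X := hm.mulAction m fun g x => (hG g x).choose_spec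
  toPermHom G X

variable (hm : Injective m) (hG : ∀ (g : G) x, g • m x ∈ Set.range m)

lemma apply_familyPermHom (g : G) (x : X) : m (familyPermHom hm hG g x) = g • m x :=
  (hG g x).choose_spec

lemma familyPermHom_eq_iff {g : G} {σ : Perm X} :
    familyPermHom hm hG g = σ ↔ ∀ x, g • m x = m (σ x) := by
  simp only [Perm.ext_iff, ← hm.eq_iff, apply_familyPermHom, eq_comm]

lemma mem_ker_familyPermHom {g : G} : g ∈ (familyPermHom hm hG).ker ↔ ∀ x, g • m x = m x :=
  familyPermHom_eq_iff hm hG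

end MulAction

instance {X : Type*} [DecidableEq X] : DecidableEq (OnePoint X) :=
  inferInstanceAs (DecidableEq (Option X))

namespace OnePoint

section Field

variable {K : Type*} [Field K] [DecidableEq K]

instance : MulAction SL(2, K) (OnePoint K) := MulAction.compHom _ SpecialLinearGroup.toGL

lemma specialLinearGroup_smul_def (g : SL(2, K)) (x : OnePoint K) :
    g • x = (g : GL (Fin 2) K) • x := rfl

lemma equivProjectivization_specialLinearGroup_smul (g : SL(2, K)) (x : OnePoint K) :
    equivProjectivization K (g • x) = g • equivProjectivization K x :=
  equivProjectivization_smul x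

lemma ker_toPermHom_specialLinearGroup :
    (MulAction.toPermHom SL(2, K) (OnePoint K)).ker = Subgroup.center SL(2, K) := by
  rw [← Projectivization.SL_mulAction_ker]
  ext g
  simp only [MonoidHom.mem_ker, Perm.ext_iff, MulAction.toPermHom_apply, MulAction.toPerm_apply,
    Perm.one_apply]
  refine (equivProjectivization K).forall_congr fun {x} => ?_
  rw [← equivProjectivization_specialLinearGroup_smul, (equivProjectivization K).apply_eq_iff_eq]

instance : MulAction SL(2, K) (Perm (OnePoint K)) :=
  MulAction.compHom _ (MulAut.conj.comp (MulAction.toPermHom SL(2, K) (OnePoint K)))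

lemma smul_perm_eq_iff {g : SL(2, K)} {τ τ' : Perm (OnePoint K)} :
    g • τ = τ' ↔ ∀ x, g • τ x = τ' (g • x) := by
  change MulAction.toPerm g * τ * (MulAction.toPerm g)⁻¹ = τ' ↔ _
  rw [mul_inv_eq_iff_eq_mul, Perm.ext_iff]
  rfl

lemma smul_perm_eq_self_iff {g : SL(2, K)} {τ : Perm (OnePoint K)} :
    g • τ = τ ↔ Commute (MulAction.toPerm g : Perm (OnePoint K)) τ := by
  rw [smul_perm_eq_iff, Commute, SemiconjBy, Perm.ext_iff]
  rfl

end Field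

variable {p : ℕ}

/-- The Möbius action with `x⁻¹` written as `x ^ (p - 2)`: the inverse of `ZMod p` does not reduce
in the kernel, so `decide` could not evaluate `g • x` itself. -/
def mobius (g : SL(2, ZMod p)) : OnePoint (ZMod p) → OnePoint (ZMod p)
  | ∞ => if g 1 0 = 0 then ∞ else ↑(g 0 0 * g 1 0 ^ (p - 2))
  | OnePoint.some k =>
    if g 1 0 * k + g 1 1 = 0 then ∞
    else ↑((g 0 0 * k + g 0 1) * (g 1 0 * k + g 1 1) ^ (p - 2))

lemma smul_eq_mobius [Fact p.Prime] (g : SL(2, ZMod p)) (x : OnePoint (ZMod p)) :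
    g • x = mobius g x := by
  cases x with
  | infty =>
    rw [specialLinearGroup_smul_def, smul_infty_eq_ite]
    simp only [mobius, SpecialLinearGroup.coe_GL_coe_matrix]
    split_ifs with h <;> simp [h, div_eq_mul_inv, ZMod.inv_eq_pow_sub_two]
  | coe k =>
    rw [specialLinearGroup_smul_def, smul_some_eq_ite]
    simp only [mobius, SpecialLinearGroup.coe_GL_coe_matrix]
    split_ifs with h <;> simp [h, div_eq_mul_inv, ZMod.inv_eq_pow_sub_two]

end OnePoint

namespace PSL2_11

instance : Fact (Nat.Prime 11) := ⟨by norm_num⟩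

/-- `M_k` as an involution: since `6` is a nonsquare and `6 * 2 = 1`, the partner of `k + y` is
`k + 6y` for `y` a nonzero square and `k + 2y` otherwise. -/
def matchingFun (k : ZMod 11) : OnePoint (ZMod 11) → OnePoint (ZMod 11)
  | ∞ => k
  | OnePoint.some x =>
    if x = k then ∞ else if IsSquare (x - k) then ↑(k + 6 * (x - k)) else ↑(k + 2 * (x - k))

lemma matchingFun_involutive (k : ZMod 11) : Involutive (matchingFun k) := by
  have : ∀ k x, matchingFun k (matchingFun k x) = x := by decide
  exact this k

def matching (k : ZMod 11) : Perm (OnePoint (ZMod 11)) := (matchingFun_involutive k).toPerm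

/-- The identity permutation at index `11` is fixed by every conjugation, so the induced action
fixes `11`, as `α`, `β` and `δ` do. -/
def matchingFamily (i : Fin 12) : Perm (OnePoint (ZMod 11)) :=
  if i = 11 then 1 else matching i

lemma matchingFamily_injective : Injective matchingFamily := by
  have : ∀ i j, matchingFamily i = matchingFamily j → i = j := by decide
  exact this

lemma exists_matchingFamily_eq (k : ZMod 11) : ∃ i, matchingFamily i = matching k := by
  revert k
  decide

def D : SL(2, ZMod 11) := ⟨!![5, 0; 0, 9], by rw [det_fin_two_of]; decide⟩

lemma mobius_transvection_matchingFamily : ∀ x y,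
    mobius (SpecialLinearGroup.transvection zero_ne_one 1) (matchingFamily x y) =
      matchingFamily (α x) (mobius (SpecialLinearGroup.transvection zero_ne_one 1) y) := by
  decide

lemma mobius_S_matchingFamily : ∀ x y,
    mobius SL2.S (matchingFamily x y) = matchingFamily (δ x) (mobius SL2.S y) := by
  decide

lemma mobius_D_matchingFamily : ∀ x y,
    mobius D (matchingFamily x y) = matchingFamily (β x) (mobius D y) := by
  decide

lemma smul_matchingFamily_of_mobius {g : SL(2, ZMod 11)} {σ : Perm (Fin 12)}
    (h : ∀ x y, mobius g (matchingFamily x y) = matchingFamily (σ x) (mobius g y)) (x : Fin 12) :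
    g • matchingFamily x = matchingFamily (σ x) := by
  rw [smul_perm_eq_iff]
  intro y
  simpa only [smul_eq_mobius] using h x y

lemma smul_matchingFamily_mem_range (g : SL(2, ZMod 11)) (x : Fin 12) :
    g • matchingFamily x ∈ Set.range matchingFamily := by
  refine MulAction.smul_mem_range_of_closure_eq_top
    (SL2.closure_S_transvection_one_eq_top 11) ?_ g x
  rintro _ (rfl | rfl)
  exacts [⟨δ, smul_matchingFamily_of_mobius mobius_S_matchingFamily⟩,
    ⟨α, smul_matchingFamily_of_mobius mobius_transvection_matchingFamily⟩]

noncomputable def exoticRep : SL(2, ZMod 11) →* Perm (Fin 12) :=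
  MulAction.familyPermHom matchingFamily_injective smul_matchingFamily_mem_range

lemma exoticRep_eq_of_mobius {g : SL(2, ZMod 11)} {σ : Perm (Fin 12)}
    (h : ∀ x y, mobius g (matchingFamily x y) = matchingFamily (σ x) (mobius g y)) :
    exoticRep g = σ :=
  (MulAction.familyPermHom_eq_iff _ _).2 (smul_matchingFamily_of_mobius h)

lemma range_exoticRep : exoticRep.range = L2_11_B := by
  have hα := exoticRep_eq_of_mobius mobius_transvection_matchingFamily
  have hβ := exoticRep_eq_of_mobius mobius_D_matchingFamily
  have hδ := exoticRep_eq_of_mobius mobius_S_matchingFamily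
  apply le_antisymm
  · rw [MonoidHom.range_eq_map, ← SL2.closure_S_transvection_one_eq_top 11, MonoidHom.map_closure,
      Set.image_pair, hδ, hα, L2_11_B]
    exact Subgroup.closure_mono (by simp [Set.insert_subset_iff])
  · rw [L2_11_B, Subgroup.closure_le]
    rintro _ (rfl | rfl | rfl)
    exacts [⟨_, hα⟩, ⟨_, hβ⟩, ⟨_, hδ⟩]

/-- Translation by `k` conjugates `M_j` to `M_(j + k)`, so one pattern of word serves for every
finite point. -/
lemma apply_matching_word_eq_self_iff : ∀ k : ZMod 11, ∀ x : OnePoint (ZMod 11),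
    (matching k * matching (k + 1) * matching (k + 6) * matching (k + 4)) x = x ↔ x = k := by
  decide

lemma apply_matching_word_eq_self_iff_infty : ∀ x : OnePoint (ZMod 11),
    (matching 0 * matching 1 * matching 5 * matching 2) x = x ↔ x = ∞ := by
  decide

lemma eq_one_of_forall_commute_matching {f : Perm (OnePoint (ZMod 11))}
    (h : ∀ k, Commute f (matching k)) : f = 1 := by
  ext x
  cases x with
  | infty =>
    exact Perm.apply_eq_self_of_commute
      ((((h 0).mul_right (h 1)).mul_right (h 5)).mul_right (h 2))
      apply_matching_word_eq_self_iff_infty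
  | coe k =>
    exact Perm.apply_eq_self_of_commute
      ((((h k).mul_right (h (k + 1))).mul_right (h (k + 6))).mul_right (h (k + 4)))
      (apply_matching_word_eq_self_iff k)

lemma ker_exoticRep : exoticRep.ker = Subgroup.center SL(2, ZMod 11) := by
  ext g
  rw [exoticRep, MulAction.mem_ker_familyPermHom, ← ker_toPermHom_specialLinearGroup,
    MonoidHom.mem_ker, MulAction.toPermHom_apply]
  simp only [smul_perm_eq_self_iff]
  refine ⟨fun h => eq_one_of_forall_commute_matching fun k => ?_, fun h x => h ▸ Commute.one_left _⟩
  obtain ⟨i, hi⟩ := exists_matchingFamily_eq k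
  exact hi ▸ h i

end PSL2_11

theorem L2_11_B_iso_PSL2_11 : Nonempty (L2_11_B ≃* L2_11) :=
  ⟨(MulEquiv.subgroupCongr PSL2_11.range_exoticRep).symm.trans
    ((QuotientGroup.quotientKerEquivRange PSL2_11.exoticRep).symm.trans
      (QuotientGroup.quotientMulEquivOfEq PSL2_11.ker_exoticRep))⟩
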